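/- arXiv:2309.14348 — 3 statements merged into one kernel-verified Lean document; each statement's English description precedes it below -/
import Mathlib

section
/- Let x be a list of length N over an alphabet V, let q, q′ be two lists of length M over V, and let j ≤ N. For every subset r of {0,…,N+M−1} with r ∩ {j, j+1, …, j+M−1} = ∅, the selected subsequences satisfy [x ⊕_j q]_r = [x ⊕_j q′]_r. -/
/-- `insertAt x q j` is the list obtained from `x` by inserting the list `q` at
position `j`, i.e. `x.take j ++ q ++ x.drop j`. -/
def insertAt {V : Type*} (x q : List V) (j : ℕ) : List V :=
  x.take j ++ q ++ x.drop j

/-- `subseq x r` is the subsequence of the list `x` consisting of the entries at the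
positions in the finite set `r`, taken in increasing order of index. -/
def subseq {V : Type*} (x : List V) (r : Finset ℕ) : List V :=
  (r.sort (· ≤ ·)).filterMap (fun i => x[i]?)

lemma insertAt_getElem?_eq {V : Type*} (x q q' : List V) (j : ℕ)
    (hj : j ≤ x.length) (hq : q.length = q'.length) (i : ℕ)
    (hi : i < j ∨ j + q.length ≤ i) :
    (insertAt x q j)[i]? = (insertAt x q' j)[i]? := by
  have htl : (x.take j).length = j := by simp [hj]
  rcases hi with hi | hi
  · unfold insertAt
    rw [List.append_assoc, List.append_assoc,
      List.getElem?_append_left (by omega), List.getElem?_append_left (by omega)]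
  · unfold insertAt
    have h1 : (x.take j ++ q).length = j + q.length := by simp [htl]
    have h2 : (x.take j ++ q').length = j + q.length := by simp [htl, hq]
    rw [List.getElem?_append_right (by omega), List.getElem?_append_right (by omega),
      h1, h2]

/-- If a kept-index mask `r ⊆ {0, …, N+M-1}` avoids all inserted positions
`{j, …, j+M-1}`, then the selected subsequences of `x ⊕_j q` and `x ⊕_j q'` coincide. -/
theorem subseq_insertAt_eq_of_disjoint
    {V : Type*} (N M : ℕ) (x q q' : List V)
    (hx : x.length = N) (hq : q.length = M) (hq' : q'.length = M)
    (j : ℕ) (hj : j ≤ N) :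
    ∀ r : Finset ℕ, r ⊆ Finset.range (N + M) → r ∩ Finset.Ico j (j + M) = ∅ →
      subseq (insertAt x q j) r = subseq (insertAt x q' j) r := by
  intro r _ hdisj
  unfold subseq
  apply List.filterMap_congr
  intro i hi
  have hir : i ∈ r := (Finset.mem_sort _).mp hi
  have : i ∉ Finset.Ico j (j + M) := by
    intro h
    have : i ∈ r ∩ Finset.Ico j (j + M) := Finset.mem_inter.mpr ⟨hir, h⟩
    simp [hdisj] at this
  rw [Finset.mem_Ico] at this
  exact insertAt_getElem?_eq x q q' j (by omega) (by omega) i (by omega)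
end

section
/- Let V be a type (the token alphabet), let Fail be a predicate on lists over V, let x be a list of length N over V, let q, q′ be lists of length M over V, let j ≤ N, let k ≤ N be a natural number, and let t be a real number. Set c = 1 − C(N,k)/C(N+M,k). If, under the uniform probability distribution U_k over the k-element subsets r of {0,…,N+M−1}, the probability that Fail([x ⊕_j q]_r) holds is strictly greater than t + c, then the probability that Fail([x ⊕_j q′]_r) holds is strictly greater than t. -/
/-- `uniformProb n k P` is the probability, under the uniform distribution over the
`k`-element subsets `r` of `{0, …, n-1}`, that `P r` holds. -/
noncomputable def uniformProb (n k : ℕ) (P : Finset ℕ → Prop) [DecidablePred P] : ℝ :=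
  ((((Finset.range n).powersetCard k).filter P).card : ℝ)
    / (((Finset.range n).powersetCard k).card : ℝ)

private lemma subseq_insert_eq {V : Type} (x q q' : List V) (j M : ℕ)
    (hq : q.length = M) (hq' : q'.length = M) (hj : j ≤ x.length)
    (r : Finset ℕ) (hr : ∀ i ∈ r, i < j ∨ j + M ≤ i) :
    subseq (insertAt x q j) r = subseq (insertAt x q' j) r := by
  unfold subseq
  apply List.filterMap_congr
  intro i hi
  have hi' : i ∈ r := (Finset.mem_sort _).mp hi
  have htl : (x.take j).length = j := by simp [List.length_take, min_eq_left hj]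
  rcases hr i hi' with h | h
  · simp [insertAt, List.append_assoc, List.getElem?_append, htl, h]
  · unfold insertAt
    rw [List.getElem?_append_right, List.getElem?_append_right]
    · simp [htl, hq, hq']
    · simp [htl, hq']; omega
    · simp [htl, hq]; omega

/-- Fixed-insertion-position form of Theorem 1: if the probability (over uniformly
random `k`-element kept-index masks `r` of `{0, …, N+M-1}`) that the alignment check
fails on the randomly dropped padded text `x ⊕_j q` exceeds `t + c`, where
`c = 1 - C(N,k)/C(N+M,k)` and `k ≤ N`, then the probability that it fails on the
randomly dropped adversarial text `x ⊕_j q'` exceeds `t`. -/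
theorem rac_fail_of_padded_fail_fixed_position
    {V : Type} (Fail : List V → Prop) [DecidablePred Fail]
    (N M : ℕ) (x q q' : List V)
    (hx : x.length = N) (hq : q.length = M) (hq' : q'.length = M)
    (j : ℕ) (hj : j ≤ N) (k : ℕ) (hk : k ≤ N) (t c : ℝ)
    (hc : c = 1 - (N.choose k : ℝ) / ((N + M).choose k : ℝ))
    (hpad : uniformProb (N + M) k (fun r => Fail (subseq (insertAt x q j) r)) > t + c) :
    uniformProb (N + M) k (fun r => Fail (subseq (insertAt x q' j) r)) > t := by
  classical
  set S := (Finset.range (N + M)).powersetCard k with hS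
  set A := S.filter (fun r => Fail (subseq (insertAt x q j) r)) with hA
  set A' := S.filter (fun r => Fail (subseq (insertAt x q' j) r)) with hA'
  set B := ((Finset.range (N + M)) \ Finset.Ico j (j + M)).powersetCard k with hB
  have hIco : Finset.Ico j (j + M) ⊆ Finset.range (N + M) := by
    intro i hi
    simp only [Finset.mem_Ico, Finset.mem_range] at hi ⊢
    omega
  have hcardB : B.card = N.choose k := by
    rw [hB, Finset.card_powersetCard, Finset.card_sdiff_of_subset hIco]
    simp [Nat.Ico_eq_range'] 
  have hcardS : S.card = (N + M).choose k := by
    rw [hS, Finset.card_powersetCard, Finset.card_range]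
  have hBS : B ⊆ S := Finset.powersetCard_mono (Finset.sdiff_subset)
  -- A ∩ B ⊆ A'
  have hsub : A ∩ B ⊆ A' := by
    intro r hr
    rw [Finset.mem_inter] at hr
    obtain ⟨hrA, hrB⟩ := hr
    rw [hA, Finset.mem_filter] at hrA
    rw [hA', Finset.mem_filter]
    refine ⟨hrA.1, ?_⟩
    have hrsub : r ⊆ (Finset.range (N + M)) \ Finset.Ico j (j + M) := by
      rw [hB, Finset.mem_powersetCard] at hrB
      exact hrB.1
    have heq := subseq_insert_eq x q q' j M hq hq' (by omega) r ?_
    · rw [← heq]; exact hrA.2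
    · intro i hi
      have := hrsub hi
      simp only [Finset.mem_sdiff, Finset.mem_Ico] at this
      omega
  have hcount : A.card + B.card ≤ S.card + A'.card := by
    have h1 : (A ∪ B).card ≤ S.card := by
      apply Finset.card_le_card
      apply Finset.union_subset (Finset.filter_subset _ _) hBS
    have h2 := Finset.card_union_add_card_inter A B
    have h3 : (A ∩ B).card ≤ A'.card := Finset.card_le_card hsub
    omega
  -- pass to reals
  have hSpos : 0 < S.card := by
    rw [hcardS]
    exact Nat.choose_pos (by omega)
  have hD : (0:ℝ) < (S.card : ℝ) := by exact_mod_cast hSpos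
  unfold uniformProb at hpad ⊢
  rw [← hS, ← hA'] at *
  rw [← hA] at hpad
  rw [gt_iff_lt, lt_div_iff₀ hD] at hpad ⊢
  have hcR : ((A.card : ℝ) + B.card) ≤ S.card + A'.card := by exact_mod_cast hcount
  have hcB : (B.card : ℝ) = (N.choose k : ℝ) := by exact_mod_cast hcardB
  have hcS : (S.card : ℝ) = ((N + M).choose k : ℝ) := by exact_mod_cast hcardS
  have hS0 : ((N + M).choose k : ℝ) ≠ 0 := by
    have := Nat.choose_pos (show k ≤ N + M by omega)
    positivity
  have hcval : c * S.card = S.card - B.card := by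
    rw [hc, hcB, hcS, sub_mul, one_mul, div_mul_cancel₀ _ hS0]
  nlinarith [hpad, hcR, hcval]
end

section
/- Let V be a type (the token alphabet), let Fail be a predicate on lists over V, let x be a list of length N over V, let q be a list of length M over V (the pad tokens), let k ≤ N be a natural number, and let t be a real number. Set c = 1 − C(N,k)/C(N+M,k). Suppose that for every position j ∈ {0,…,N}, the probability under the uniform distribution U_k over k-element subsets r of {0,…,N+M−1} that Fail([x ⊕_j q]_r) holds is strictly greater than t + c. Then for every position j ∈ {0,…,N} and every list q′ of length M over V, the probability that Fail([x ⊕_j q′]_r) holds is strictly greater than t. -/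
lemma insertAt_getElem?_of_notIn {V : Type*} (x q : List V) (j M : ℕ)
    (hq : q.length = M) (hj : j ≤ x.length) (i : ℕ) (hi : i < j ∨ j + M ≤ i) :
    (insertAt x q j)[i]? = if i < j then x[i]? else x[i - M]? := by
  have htl : (x.take j).length = j := by simp [hj]
  unfold insertAt
  rcases hi with h | h
  · rw [List.getElem?_append, if_pos (by rw [List.length_append, htl, hq]; omega),
      List.getElem?_append, if_pos (by omega), List.getElem?_take, if_pos h, if_pos h]
  · rw [List.getElem?_append_right (by rw [List.length_append, htl, hq]; omega),
      List.getElem?_drop, List.length_append, htl, hq, if_neg (by omega)]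
    congr 1
    omega

lemma subseq_insertAt_eq {V : Type*} (x q q' : List V) (j M : ℕ)
    (hq : q.length = M) (hq' : q'.length = M) (hj : j ≤ x.length)
    (r : Finset ℕ) (hr : ∀ i ∈ r, i < j ∨ j + M ≤ i) :
    subseq (insertAt x q j) r = subseq (insertAt x q' j) r := by
  unfold subseq
  apply List.filterMap_congr
  intro i hi
  have hi' : i ∈ r := (Finset.mem_sort _).mp hi
  rw [insertAt_getElem?_of_notIn x q j M hq hj i (hr i hi'),
    insertAt_getElem?_of_notIn x q' j M hq' hj i (hr i hi')]

/-- Theorem 1 of the paper, full quantified form: if for every insertion position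
`j ≤ N` the probability (over uniformly random `k`-element kept-index masks `r` of
`{0, …, N+M-1}`) that the alignment check fails on the randomly dropped padded text
`x ⊕_j q` exceeds `t + c`, where `c = 1 - C(N,k)/C(N+M,k)` and `k ≤ N`, then for every
insertion position `j ≤ N` and every adversarial prompt `q'` of length `M`, the
probability that the alignment check fails on the randomly dropped adversarial text
`x ⊕_j q'` exceeds `t`. -/
theorem rac_fail_of_padded_fail
    {V : Type} (Fail : List V → Prop) [DecidablePred Fail]
    (N M : ℕ) (x q : List V)
    (hx : x.length = N) (hq : q.length = M)
    (k : ℕ) (hk : k ≤ N) (t c : ℝ)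
    (hc : c = 1 - (N.choose k : ℝ) / ((N + M).choose k : ℝ))
    (hpad : ∀ j ≤ N,
      uniformProb (N + M) k (fun r => Fail (subseq (insertAt x q j) r)) > t + c) :
    ∀ j ≤ N, ∀ q' : List V, q'.length = M →
      uniformProb (N + M) k (fun r => Fail (subseq (insertAt x q' j) r)) > t := by
  intro j hj q' hq'
  set T := (Finset.range (N + M)).powersetCard k with hT
  have hTcard : T.card = (N + M).choose k := by
    rw [hT, Finset.card_powersetCard, Finset.card_range]
  set S := Finset.Ico j (j + M) with hS
  set A := T.filter (fun r => Fail (subseq (insertAt x q j) r)) with hA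
  set B := T.filter (fun r => Fail (subseq (insertAt x q' j) r)) with hB
  set D := T.filter (fun r => ∀ i ∈ r, i ∉ S) with hD
  -- D has cardinality C(N, k)
  have hDeq : D = (Finset.range (N + M) \ S).powersetCard k := by
    ext r
    simp only [hD, Finset.mem_filter, hT, Finset.mem_powersetCard, Finset.subset_sdiff,
      Finset.disjoint_left]
    tauto
  have hScard : S.card = M := by simp [hS]
  have hSsub : S ⊆ Finset.range (N + M) := by
    intro i hi
    simp only [hS, Finset.mem_Ico] at hi
    simp only [Finset.mem_range]
    omega
  have hDcard : D.card = N.choose k := by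
    rw [hDeq, Finset.card_powersetCard, Finset.card_sdiff_of_subset hSsub, Finset.card_range, hScard]
    congr 1
    omega
  -- A ∩ D ⊆ B
  have hsub : A ∩ D ⊆ B := by
    intro r hr
    simp only [hA, hD, Finset.mem_inter, Finset.mem_filter] at hr
    obtain ⟨⟨hrT, hrF⟩, _, hrS⟩ := hr
    simp only [hB, Finset.mem_filter]
    refine ⟨hrT, ?_⟩
    rw [← subseq_insertAt_eq x q q' j M hq hq' (by omega) r ?_]
    · exact hrF
    · intro i hi
      have := hrS i hi
      simp only [hS, Finset.mem_Ico] at this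
      omega
  -- cardinality bound
  have hAT : A ⊆ T := Finset.filter_subset _ _
  have hBT : B ⊆ T := Finset.filter_subset _ _
  have hDT : D ⊆ T := Finset.filter_subset _ _
  have hunion : (A ∪ D).card ≤ T.card := Finset.card_le_card (Finset.union_subset hAT hDT)
  have hkey : A.card + D.card ≤ B.card + T.card := by
    have h1 := Finset.card_inter_add_card_union A D
    have h2 := Finset.card_le_card hsub
    omega
  -- now real arithmetic
  have hTpos : 0 < (N + M).choose k := Nat.choose_pos (by omega)
  have hTpos' : (0 : ℝ) < ((N + M).choose k : ℝ) := by exact_mod_cast hTpos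
  have hPA := hpad j hj
  have hPAeq : uniformProb (N + M) k (fun r => Fail (subseq (insertAt x q j) r))
      = (A.card : ℝ) / ((N + M).choose k : ℝ) := by
    rw [uniformProb, hTcard]
  have hPBeq : uniformProb (N + M) k (fun r => Fail (subseq (insertAt x q' j) r))
      = (B.card : ℝ) / ((N + M).choose k : ℝ) := by
    rw [uniformProb, hTcard]
  rw [hPBeq]
  rw [hPAeq] at hPA
  have hkeyR : (A.card : ℝ) + (N.choose k : ℝ) ≤ (B.card : ℝ) + ((N + M).choose k : ℝ) := by
    rw [← hDcard, ← hTcard]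
    exact_mod_cast hkey
  rw [hc] at hPA
  rw [gt_iff_lt, lt_div_iff₀ hTpos'] at hPA ⊢
  have hcancel : (↑(N.choose k) / ↑((N + M).choose k)) * ((N + M).choose k : ℝ)
      = (N.choose k : ℝ) := div_mul_cancel₀ _ (ne_of_gt hTpos')
  nlinarith [hPA, hkeyR, hcancel]
end
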